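/- Let X be a nonempty compact metrizable topological space and let f : X → X be an arbitrary function. Then the generalized recurrent set GR(f) is nonempty: there exists a point x ∈ X such that for EVERY metric d on X compatible with the topology of X (i.e., every function d : X × X → ℝ satisfying the metric axioms whose induced metric topology equals the given topology), x is strongly chain-recurrent for f with respect to d. -/

import Mathlib

/-!
Zorn's lemma and Cantor's intersection theorem give a minimal nonempty closed set `M` with
`f '' M ⊆ M`. For `x ∈ M` and any compatible metric, the points of `M` reachable from `x` by
arbitrarily cheap strong chains form a nonempty (it contains `f x`) closed `f`-invariant subset
of `M`; closedness holds because only the last jump of a chain needs to move, and this costs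
at most the distance moved. By minimality this subset is all of `M`, so it contains `x`.
No continuity of `f` is needed.
-/

open Set

def IsStrongChainWith {X : Type*} (f : X → X) (d : X → X → ℝ) (ε : ℝ) (x y : X)
    (n : ℕ) (c : ℕ → X) : Prop :=
  1 ≤ n ∧ c 0 = x ∧ c n = y ∧
    ∑ i ∈ Finset.range n, d (f (c i)) (c (i + 1)) < ε

section

variable {X : Type*}

/-- The strong chain relation `SC_d`. -/
def StrongChainRel (f : X → X) (d : X → X → ℝ) (x y : X) : Prop :=
  ∀ ε > 0, ∃ (n : ℕ) (c : ℕ → X), IsStrongChainWith f d ε x y n c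

theorem exists_minimal_nonempty_isClosed_mapsTo [TopologicalSpace X] [CompactSpace X]
    [Nonempty X] (f : X → X) :
    ∃ M, Minimal (fun S : Set X => S.Nonempty ∧ IsClosed S ∧ MapsTo f S S) M := by
  set 𝒮 := {S : Set X | S.Nonempty ∧ IsClosed S ∧ MapsTo f S S}
  have hchain_lb : ∀ c ⊆ 𝒮, IsChain (· ⊆ ·) c → c.Nonempty → ∃ lb ∈ 𝒮, ∀ s ∈ c, lb ⊆ s := by
    rintro c hc hchain ⟨S, hS⟩
    have : Nonempty c := ⟨⟨S, hS⟩⟩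
    refine ⟨⋂₀ c, ⟨?_, isClosed_sInter fun s hs => (hc hs).2.1, ?_⟩,
      fun s hs => sInter_subset_of_mem hs⟩
    · exact IsCompact.nonempty_sInter_of_directed_nonempty_isCompact_isClosed
        (IsChain.directedOn (r := fun s t : Set X => s ⊇ t) hchain.symm) (fun s hs => (hc hs).1)
        (fun s hs => (hc hs).2.1.isCompact) (fun s hs => (hc hs).2.1)
    · exact mapsTo_sInter.2 fun s hs => (hc hs).2.2.mono_left (sInter_subset_of_mem hs)
  obtain ⟨M, -, hM⟩ := zorn_superset_nonempty 𝒮 hchain_lb univ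
    ⟨univ_nonempty, isClosed_univ, mapsTo_univ f univ⟩
  exact ⟨M, hM⟩

namespace IsStrongChainWith

variable {f : X → X} {d : X → X → ℝ} {ε : ℝ} {x y : X} {n : ℕ} {c : ℕ → X}

theorem one (h : d (f x) y < ε) :
    IsStrongChainWith f d ε x y 1 (fun i => if i = 0 then x else y) :=
  ⟨le_rfl, rfl, rfl, by simpa using h⟩

theorem mono (h : IsStrongChainWith f d ε x y n c) {ε' : ℝ} (hε : ε ≤ ε') :
    IsStrongChainWith f d ε' x y n c :=
  ⟨h.1, h.2.1, h.2.2.1, h.2.2.2.trans_le hε⟩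

theorem snoc (h : IsStrongChainWith f d ε x y n c) (z : X) :
    IsStrongChainWith f d (ε + d (f y) z) x z (n + 1) (Function.update c (n + 1) z) := by
  obtain ⟨hn, hc0, hcn, hsum⟩ := h
  refine ⟨by omega, by rw [Function.update_of_ne (by omega), hc0], Function.update_self .., ?_⟩
  rw [Finset.sum_range_succ, Function.update_self, Function.update_of_ne (by omega), hcn]
  have hprefix : ∀ i ∈ Finset.range n, d (f (Function.update c (n + 1) z i))
      (Function.update c (n + 1) z (i + 1)) = d (f (c i)) (c (i + 1)) := by
    intro i hi
    rw [Finset.mem_range] at hi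
    rw [Function.update_of_ne (by omega), Function.update_of_ne (by omega)]
  rw [Finset.sum_congr rfl hprefix]
  linarith

theorem update_last [PseudoMetricSpace X]
    (h : IsStrongChainWith f (fun a b => dist a b) ε x y n c) (z : X) :
    IsStrongChainWith f (fun a b => dist a b) (ε + dist y z) x z n (Function.update c n z) := by
  obtain ⟨hn, hc0, hcn, hsum⟩ := h
  obtain ⟨p, rfl⟩ : ∃ p, n = p + 1 := ⟨n - 1, by omega⟩
  refine ⟨hn, by rw [Function.update_of_ne (by omega), hc0], Function.update_self .., ?_⟩
  rw [Finset.sum_range_succ] at hsum ⊢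
  rw [Function.update_self, Function.update_of_ne (by omega)]
  have hprefix : ∀ i ∈ Finset.range p, dist (f (Function.update c (p + 1) z i))
      (Function.update c (p + 1) z (i + 1)) = dist (f (c i)) (c (i + 1)) := by
    intro i hi
    rw [Finset.mem_range] at hi
    rw [Function.update_of_ne (by omega), Function.update_of_ne (by omega)]
  beta_reduce at hsum ⊢
  rw [Finset.sum_congr rfl hprefix]
  have := dist_triangle (f (c p)) (c (p + 1)) z
  rw [hcn] at this hsum
  linarith

end IsStrongChainWith

namespace StrongChainRel

variable [PseudoMetricSpace X] {f : X → X} {x y : X}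

theorem apply_self (f : X → X) (x : X) : StrongChainRel f (fun a b => dist a b) x (f x) :=
  fun _ hε => ⟨1, _, .one (by simpa using hε)⟩

theorem apply (h : StrongChainRel f (fun a b => dist a b) x y) :
    StrongChainRel f (fun a b => dist a b) x (f y) := fun ε hε => by
  obtain ⟨n, c, hc⟩ := h ε hε
  exact ⟨n + 1, _, (hc.snoc (f y)).mono (by simp)⟩

end StrongChainRel

theorem isClosed_setOf_strongChainRel [PseudoMetricSpace X] (f : X → X) (x : X) :
    IsClosed {y | StrongChainRel f (fun a b => dist a b) x y} := by
  refine isClosed_of_closure_subset fun y hy ε hε => ?_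
  obtain ⟨z, hz, hyz⟩ := Metric.mem_closure_iff.1 hy (ε / 2) (by linarith)
  obtain ⟨n, c, hc⟩ := hz (ε / 2) (by linarith)
  refine ⟨n, _, (hc.update_last y).mono ?_⟩
  rw [dist_comm] at hyz
  linarith

theorem strongChainRel_self_of_mem_minimal [PseudoMetricSpace X] {f : X → X} {M : Set X}
    (hM : Minimal (fun S : Set X => S.Nonempty ∧ IsClosed S ∧ MapsTo f S S) M) {x : X}
    (hx : x ∈ M) : StrongChainRel f (fun a b => dist a b) x x := by
  obtain ⟨-, hM_closed, hM_maps⟩ := hM.prop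
  set reach := M ∩ {y | StrongChainRel f (fun a b => dist a b) x y}
  have hreach : reach.Nonempty ∧ IsClosed reach ∧ MapsTo f reach reach :=
    ⟨⟨f x, hM_maps hx, .apply_self f x⟩, hM_closed.inter (isClosed_setOf_strongChainRel f x),
      fun _ hy => ⟨hM_maps hy.1, hy.2.apply⟩⟩
  exact (hM.le_of_le hreach inter_subset_left hx).2

end

theorem generalized_recurrent_set_nonempty_general
    {X : Type*} [t : TopologicalSpace X] [CompactSpace X] [Nonempty X]
    (f : X → X) :
    ∃ x : X, ∀ m : MetricSpace X,
      m.toUniformSpace.toTopologicalSpace = t →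
      ∀ ε : ℝ, 0 < ε →
        ∃ (n : ℕ) (c : ℕ → X),
          IsStrongChainWith f (fun a b => m.dist a b) ε x x n c := by
  obtain ⟨M, hM⟩ := exists_minimal_nonempty_isClosed_mapsTo f
  obtain ⟨x, hx⟩ := hM.prop.1
  refine ⟨x, fun m hm => ?_⟩
  subst hm
  exact strongChainRel_self_of_mem_minimal hM hx

/-- The generalized recurrent set of an arbitrary self-map of a nonempty compact
metrizable space is nonempty: some point is strongly chain-recurrent with respect to
every metric compatible with the topology. -/
theorem generalized_recurrent_set_nonempty
    {X : Type*} [t : TopologicalSpace X] [CompactSpace X] [Nonempty X]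
    [TopologicalSpace.MetrizableSpace X] (f : X → X) :
    ∃ x : X, ∀ m : MetricSpace X,
      m.toUniformSpace.toTopologicalSpace = t →
      ∀ ε : ℝ, 0 < ε →
        ∃ (n : ℕ) (c : ℕ → X),
          IsStrongChainWith f (fun a b => m.dist a b) ε x x n c :=
  generalized_recurrent_set_nonempty_general (t := t) f
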